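/- Let f ∈ C¹(S¹) with ∫ f dx = 0 and let a_1, a_2, … be any sequence of integers ≥ 2. Then there is a constant C depending only on ‖f‖ := sup|f| + sup|f'| such that Var_μ(S_n) ≤ C·n for all n ≥ 1. -/

import Mathlib

/-!
Setting: the circle `S¹ = ℝ/ℤ` with Lebesgue (Haar) probability measure, realized as
`1`-periodic functions on `ℝ` together with Lebesgue measure restricted to `(0, 1]`.
For an integer `b ≥ 2`, the map `T_b x = bx (mod 1)` lifts to `x ↦ b * x` on `ℝ`, and its
Perron–Frobenius operator (the `L²`-adjoint of the Koopman operator `g ↦ g ∘ T_b`) is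
`(T̂*_b g)(x) = (1/b) ∑_{j<b} g((x+j)/b)`.
-/

open MeasureTheory ProbabilityTheory Filter Function
open scoped ENNReal Topology

/-- The Lebesgue (Haar) probability measure of the circle, realized on `(0, 1] ⊆ ℝ`. -/
noncomputable def circleMeasure : Measure ℝ := volume.restrict (Set.Ioc 0 1)

/-- The Perron–Frobenius operator of `T_b x = bx (mod 1)`, acting on (`1`-periodic)
functions on `ℝ`: `(T̂*_b g)(x) = (1/b) ∑_{j<b} g((x+j)/b)`. -/
noncomputable def PFc (b : ℕ) (g : ℝ → ℝ) : ℝ → ℝ :=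
  fun x => (1 / (b : ℝ)) * ∑ j ∈ Finset.range b, g ((x + j) / b)

/-- `T̂*_{b_1} ⋯ T̂*_{b_k} g` for a finite sequence `[b_1, …, b_k]`. -/
noncomputable def PFcList (l : List ℕ) (g : ℝ → ℝ) : ℝ → ℝ := l.foldr PFc g

/-- `PFcSeg a i j = T̂*_{[i..j]} = T̂*_{a_j} ⋯ T̂*_{a_i}` for `i ≤ j`, the identity otherwise. -/
noncomputable def PFcSeg (a : ℕ → ℕ) (i : ℕ) : ℕ → (ℝ → ℝ) → (ℝ → ℝ)
  | 0 => id
  | j + 1 => if i ≤ j + 1 then fun g => PFc (a (j + 1)) (PFcSeg a i j g) else id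

/-- `u_k = ∑_{i=1}^k T̂*_{[i+1..k]} f`. -/
noncomputable def uc (a : ℕ → ℕ) (f : ℝ → ℝ) (k : ℕ) : ℝ → ℝ :=
  fun x => ∑ i ∈ Finset.Icc 1 k, PFcSeg a (i + 1) k f x

/-- `T_{[k]} = T_{a_k} ∘ ⋯ ∘ T_{a_1}` is multiplication (mod 1) by `∏_{i=1}^k a_i`. -/
def prodA (a : ℕ → ℕ) (k : ℕ) : ℕ := ∏ i ∈ Finset.Icc 1 k, a i

/-- The Birkhoff-like sums `S_n = ∑_{k=1}^n f ∘ T_{[k]}`, for a `1`-periodic `f`. -/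
noncomputable def Sc (a : ℕ → ℕ) (f : ℝ → ℝ) (n : ℕ) : ℝ → ℝ :=
  fun x => ∑ k ∈ Finset.Icc 1 n, f ((prodA a k : ℝ) * x)

/-- The `C¹`-norm `‖g‖ = sup|g| + sup|g'|`. -/
noncomputable def Cnorm (g : ℝ → ℝ) : ℝ := (⨆ x : ℝ, |g x|) + ⨆ x : ℝ, |deriv g x|

/-- The pullback σ-algebra `T_b^{-1}(Borel)` on the circle, realized on `ℝ` as the σ-algebra
generated by the lift `x ↦ fract (b * x)` of `T_b`. -/
noncomputable def circleSigma (b : ℕ) : MeasurableSpace ℝ :=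
  MeasurableSpace.comap (fun x => Int.fract ((b : ℝ) * x)) Real.measurableSpace

/-- `cos²χ_k = ‖E[u_k | T_{a_{k+1}}^{-1}(Borel)]‖²_{L²} / ‖u_k‖²_{L²}` (`= 0` when `u_k = 0`,
by the convention `c / 0 = 0`). -/
noncomputable def cos2c (a : ℕ → ℕ) (f : ℝ → ℝ) (k : ℕ) : ℝ :=
  (∫ x, ((circleMeasure[uc a f k|circleSigma (a (k + 1))]) x) ^ 2 ∂circleMeasure) /
    ∫ x, (uc a f k x) ^ 2 ∂circleMeasure

/-!
Bound `Var(S_n)` by the second moment `∑_{k,l ≤ n} ∫₀¹ f(P_k x) f(P_l x) dx`, where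
`P_k = a_1 ⋯ a_k`. For `k ≤ l` we have `P_l = P_k m` with `m ≥ 2^(l-k)`, and since `x ↦ P_k x`
preserves Lebesgue measure on the circle the correlation equals `∫₀¹ f(x) f(mx) dx`. As `f` has
mean zero its primitive `F` is periodic with `|F| ≤ sup|f|`; integrating by parts against
`F(mx)/m` bounds that integral by `sup|f| sup|f'| / m ≤ sup|f| sup|f'| 2^(-|k-l|)`. Summing
this geometric decay over `l` gives `Var(S_n) ≤ 4 sup|f| sup|f'| n`.
-/

open Finset

namespace Function.Periodic

variable {g : ℝ → ℝ} {c : ℝ}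

lemma exists_abs_le (hg : Periodic g c) (hc : c ≠ 0) (hcont : Continuous g) :
    ∃ M, ∀ x, |g x| ≤ M := by
  obtain ⟨M, hM⟩ := isBounded_iff_forall_norm_le.mp (hg.isBounded_of_continuous hc hcont)
  exact ⟨M, fun x => hM _ (Set.mem_range_self x)⟩

lemma primitive (hg : Periodic g c) (hcont : Continuous g) (h0 : ∫ x in 0..c, g x = 0) :
    Periodic (fun y => ∫ x in 0..y, g x) c := fun y => by
  simp only [hg.intervalIntegral_add_eq_add 0 y fun _ _ => hcont.intervalIntegrable _ _,
    zero_add, h0, add_zero]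

lemma abs_primitive_le (hg : Periodic g c) (hc : 0 < c) (hcont : Continuous g)
    (h0 : ∫ x in 0..c, g x = 0) {M : ℝ} (hM : ∀ x, |g x| ≤ M) (y : ℝ) :
    |∫ x in 0..y, g x| ≤ M * c := by
  obtain ⟨z, hz, hyz⟩ := (hg.primitive hcont h0).exists_mem_Ico₀ hc y
  have hM0 : 0 ≤ M := (abs_nonneg _).trans (hM 0)
  calc |∫ x in 0..y, g x| = ‖∫ x in 0..z, g x‖ := congrArg abs hyz
    _ ≤ M * |z - 0| := intervalIntegral.norm_integral_le_of_norm_le_const fun x _ => hM x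
    _ ≤ M * c := by
      rw [sub_zero, abs_of_nonneg hz.1]
      exact mul_le_mul_of_nonneg_left hz.2.le hM0

lemma intervalIntegral_comp_nat_mul (hg : Periodic g c) (hcont : Continuous g) {P : ℕ}
    (hP : P ≠ 0) : ∫ x in 0..c, g (P * x) = ∫ x in 0..c, g x := by
  have hP' : (P : ℝ) ≠ 0 := Nat.cast_ne_zero.mpr hP
  have hsum := hg.intervalIntegral_add_zsmul_eq P 0 fun _ _ => hcont.intervalIntegrable _ _
  simp only [zero_add, natCast_zsmul, nsmul_eq_mul] at hsum
  rw [intervalIntegral.integral_comp_mul_left _ hP', mul_zero, hsum, smul_eq_mul,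
    inv_mul_cancel_left₀ hP']

end Function.Periodic

theorem Function.Periodic.deriv {g : ℝ → ℝ} {c : ℝ} (hg : Periodic g c) :
    Periodic (deriv g) c := fun x => by
  rw [← deriv_comp_add_const, hg.funext]

theorem abs_integral_mul_comp_nat_mul_le {u f : ℝ → ℝ} (hu : ContDiff ℝ 1 u)
    (hf : Periodic f 1) (hfc : Continuous f) (hmean : ∫ x in 0..1, f x = 0) {M M' : ℝ}
    (hM : ∀ x, |f x| ≤ M) (hM' : ∀ x, |deriv u x| ≤ M') {m : ℕ} (hm : m ≠ 0) :
    |∫ x in 0..1, u x * f (m * x)| ≤ M * M' / m := by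
  set F : ℝ → ℝ := fun y => ∫ x in 0..y, f x
  have hm' : (0 : ℝ) < m := Nat.cast_pos.mpr (Nat.pos_of_ne_zero hm)
  set v : ℝ → ℝ := fun x => F (m * x) / m
  have hv : ∀ x, HasDerivAt v (f (m * x)) x := fun x => by
    have := (((hfc.integral_hasStrictDerivAt 0 (m * x)).hasDerivAt).comp x
      ((hasDerivAt_id x).const_mul (m : ℝ))).div_const (m : ℝ)
    rwa [mul_one, mul_div_cancel_right₀ _ hm'.ne'] at this
  have hv0 : v 0 = 0 := by simp [v, F]
  have hv1 : v 1 = 0 := by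
    simpa [v, F] using Or.inl ((hf.primitive hfc hmean).nat_mul_eq m)
  have hibp := intervalIntegral.integral_mul_deriv_eq_deriv_mul_of_hasDerivAt
    hu.continuous.continuousOn
    (continuous_iff_continuousAt.mpr fun x => (hv x).continuousAt).continuousOn
    (fun x _ => (hu.differentiable one_ne_zero x).hasDerivAt) (fun x _ => hv x)
    ((hu.continuous_deriv le_rfl).intervalIntegrable 0 1)
    ((hfc.comp (continuous_const_mul _)).intervalIntegrable 0 1)
  have hbound : ∀ x, ‖deriv u x * v x‖ ≤ M' * (M / m) := fun x => by
    rw [norm_mul, Real.norm_eq_abs, Real.norm_eq_abs, abs_div, Nat.abs_cast]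
    have hF : |F (m * x)| ≤ M := by
      simpa using hf.abs_primitive_le one_pos hfc hmean hM (m * x)
    exact mul_le_mul (hM' x) (div_le_div_of_nonneg_right hF hm'.le) (by positivity)
      ((abs_nonneg _).trans (hM' 0))
  rw [hibp, hv0, hv1, mul_zero, mul_zero, sub_zero, zero_sub, abs_neg]
  calc |∫ x in 0..1, deriv u x * v x| ≤ M' * (M / m) * |1 - 0| :=
        intervalIntegral.norm_integral_le_of_norm_le_const fun x _ => hbound x
    _ = M * M' / m := by rw [sub_zero, abs_one, mul_one, mul_div_assoc', mul_comm]

theorem integral_comp_nat_mul_mul_comp_nat_mul {f : ℝ → ℝ} (hf : Periodic f 1)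
    (hfc : Continuous f) {P : ℕ} (hP : P ≠ 0) (m : ℕ) :
    ∫ x in 0..1, f (P * x) * f ((P * m : ℕ) * x) = ∫ x in 0..1, f x * f (m * x) := by
  have hg : Periodic (fun x => f x * f (m * x)) 1 := fun x => by
    simp only [hf x, mul_add, mul_one]
    simpa using congrArg (f x * ·) (hf.nat_mul m (m * x))
  rw [← hg.intervalIntegral_comp_nat_mul (hfc.mul (hfc.comp (continuous_const_mul _))) hP]
  simp only [Nat.cast_mul, mul_assoc, mul_left_comm (m : ℝ)]

lemma prodA_mul_prod_Ioc (a : ℕ → ℕ) {k l : ℕ} (hkl : k ≤ l) :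
    prodA a k * ∏ i ∈ Ioc k l, a i = prodA a l := by
  rw [prodA, prodA, ← zero_add 1, Icc_add_one_left_eq_Ioc, Icc_add_one_left_eq_Ioc]
  exact prod_Ioc_consecutive a (Nat.zero_le k) hkl

theorem abs_integral_comp_prodA_mul_le {f : ℝ → ℝ} (hf : Periodic f 1)
    (hf_C1 : ContDiff ℝ 1 f) (hmean : ∫ x in 0..1, f x = 0) {M M' : ℝ} (hM : ∀ x, |f x| ≤ M)
    (hM' : ∀ x, |deriv f x| ≤ M') {a : ℕ → ℕ} (ha : ∀ i, 2 ≤ a i) (k l : ℕ) :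
    |∫ x in 0..1, f (prodA a k * x) * f (prodA a l * x)| ≤
      M * M' * (1 / 2) ^ Nat.dist k l := by
  wlog hkl : k ≤ l generalizing k l
  · rw [Nat.dist_comm, intervalIntegral.integral_congr fun x _ => mul_comm _ _]
    exact this l k (by omega)
  have hMM' : 0 ≤ M * M' :=
    mul_nonneg ((abs_nonneg _).trans (hM 0)) ((abs_nonneg _).trans (hM' 0))
  set m := ∏ i ∈ Ioc k l, a i
  have hm : 2 ^ (l - k) ≤ m := by
    simpa using pow_card_le_prod (Ioc k l) a 2 fun i _ => ha i
  have hm' : (2 : ℝ) ^ (l - k) ≤ m := by exact_mod_cast hm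
  have hPk : prodA a k ≠ 0 := prod_ne_zero_iff.mpr fun i _ => by linarith [ha i]
  rw [← prodA_mul_prod_Ioc a hkl,
    integral_comp_nat_mul_mul_comp_nat_mul hf hf_C1.continuous hPk, Nat.dist_eq_sub_of_le hkl,
    one_div_pow, ← div_eq_mul_one_div]
  refine (abs_integral_mul_comp_nat_mul_le hf_C1 hf hf_C1.continuous hmean hM hM'
    ((pow_pos two_pos _).trans_le hm).ne').trans ?_
  gcongr

lemma sum_range_pow_dist_le {r : ℝ} (hr0 : 0 ≤ r) (hr1 : r < 1) (k N : ℕ) :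
    ∑ l ∈ range N, r ^ Nat.dist k l ≤ 2 / (1 - r) := by
  have hgeom : ∀ K, ∑ j ∈ range K, r ^ j ≤ 1 / (1 - r) := fun K => by
    simpa using geom_sum_Ico_le_of_lt_one (m := 0) (n := K) hr0 hr1
  have hbelow : ∑ l ∈ range N with l ≤ k, r ^ Nat.dist k l ≤ 1 / (1 - r) := calc
    _ ≤ ∑ l ∈ (range (k + 1)).image (k - ·), r ^ Nat.dist k l :=
      sum_le_sum_of_subset_of_nonneg (fun l hl => by
        simp only [mem_filter, mem_range, mem_image] at hl ⊢
        exact ⟨k - l, by omega, by omega⟩) fun _ _ _ => by positivity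
    _ ≤ ∑ j ∈ range (k + 1), r ^ Nat.dist k (k - j) :=
      sum_image_le_of_nonneg fun _ _ => by positivity
    _ = ∑ j ∈ range (k + 1), r ^ j := sum_congr rfl fun j hj => by
      rw [mem_range] at hj
      rw [Nat.dist_eq_sub_of_le_right (Nat.sub_le k j), Nat.sub_sub_self (by omega)]
    _ ≤ 1 / (1 - r) := hgeom _
  have habove : ∑ l ∈ range N with ¬l ≤ k, r ^ Nat.dist k l ≤ 1 / (1 - r) := calc
    _ ≤ ∑ l ∈ (range N).image (k + ·), r ^ Nat.dist k l :=
      sum_le_sum_of_subset_of_nonneg (fun l hl => by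
        simp only [mem_filter, mem_range, mem_image] at hl ⊢
        exact ⟨l - k, by omega, by omega⟩) fun _ _ _ => by positivity
    _ ≤ ∑ j ∈ range N, r ^ Nat.dist k (k + j) :=
      sum_image_le_of_nonneg fun _ _ => by positivity
    _ = ∑ j ∈ range N, r ^ j := by simp [Nat.dist_eq_sub_of_le]
    _ ≤ 1 / (1 - r) := hgeom _
  rw [← sum_filter_add_sum_filter_not _ (· ≤ k)]
  linarith [show 2 / (1 - r) = 1 / (1 - r) + 1 / (1 - r) by ring]

theorem sum_sum_le_of_abs_le_pow_dist {c : ℕ → ℕ → ℝ} {B r : ℝ} (hr0 : 0 ≤ r) (hr1 : r < 1)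
    (hc : ∀ k l, |c k l| ≤ B * r ^ Nat.dist k l) (n : ℕ) :
    ∑ k ∈ Icc 1 n, ∑ l ∈ Icc 1 n, c k l ≤ 2 * B / (1 - r) * n := by
  have hB : 0 ≤ B := by simpa using (abs_nonneg _).trans (hc 0 0)
  have hrow : ∀ k, ∑ l ∈ Icc 1 n, c k l ≤ 2 * B / (1 - r) := fun k => calc
    _ ≤ ∑ l ∈ Icc 1 n, B * r ^ Nat.dist k l :=
      sum_le_sum fun l _ => (le_abs_self _).trans (hc k l)
    _ ≤ ∑ l ∈ range (n + 1), B * r ^ Nat.dist k l :=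
      sum_le_sum_of_subset_of_nonneg (fun l hl => by simp only [mem_Icc, mem_range] at hl ⊢; omega)
        fun _ _ _ => by positivity
    _ ≤ B * (2 / (1 - r)) := by rw [← mul_sum]; gcongr; exact sum_range_pow_dist_le hr0 hr1 k _
    _ = 2 * B / (1 - r) := by ring
  calc ∑ k ∈ Icc 1 n, ∑ l ∈ Icc 1 n, c k l ≤ ∑ k ∈ Icc 1 n, 2 * B / (1 - r) :=
        sum_le_sum fun k _ => hrow k
    _ = 2 * B / (1 - r) * n := by simp [mul_comm]

instance : IsProbabilityMeasure circleMeasure :=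
  ⟨by simp [circleMeasure]⟩

lemma integral_circleMeasure (g : ℝ → ℝ) : ∫ x, g x ∂circleMeasure = ∫ x in 0..1, g x := by
  rw [circleMeasure, intervalIntegral.integral_of_le zero_le_one]

lemma integral_sq_finsetSum {ι Ω : Type*} [MeasurableSpace Ω] {μ : Measure Ω} (s : Finset ι)
    {g : ι → Ω → ℝ} (hg : ∀ i ∈ s, ∀ j ∈ s, Integrable (fun x => g i x * g j x) μ) :
    ∫ x, (∑ i ∈ s, g i x) ^ 2 ∂μ = ∑ i ∈ s, ∑ j ∈ s, ∫ x, g i x * g j x ∂μ := by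
  simp_rw [sq, sum_mul_sum]
  rw [integral_finsetSum _ fun i hi => integrable_finsetSum _ fun j hj => hg i hi j hj]
  exact sum_congr rfl fun i hi => integral_finsetSum _ fun j hj => hg i hi j hj

lemma variance_Sc_le {f : ℝ → ℝ} (hf : Continuous f) (a : ℕ → ℕ) (n : ℕ) :
    variance (Sc a f n) circleMeasure ≤
      ∑ k ∈ Icc 1 n, ∑ l ∈ Icc 1 n, ∫ x in 0..1, f (prodA a k * x) * f (prodA a l * x) := by
  have hterm : ∀ k, Continuous fun x => f (prodA a k * x) := fun k =>
    hf.comp (continuous_const_mul _)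
  have hS : Continuous (Sc a f n) := continuous_finsetSum _ fun k _ => hterm k
  refine (variance_le_expectation_sq hS.aestronglyMeasurable).trans_eq ?_
  simp_rw [Pi.pow_apply, Sc, ← integral_circleMeasure]
  exact integral_sq_finsetSum _ fun k _ l _ =>
    ((hterm k).mul (hterm l)).integrableOn_Icc.mono_set Set.Ioc_subset_Icc_self

theorem variance_linear_upper_bound
    (f : ℝ → ℝ) (hf_per : Periodic f 1) (hf_C1 : ContDiff ℝ 1 f)
    (hf_mean : ∫ x in Set.Ioc (0 : ℝ) 1, f x = 0) :
    ∃ C : ℝ, ∀ a : ℕ → ℕ, (∀ k, 2 ≤ a k) → ∀ n : ℕ, 1 ≤ n →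
      variance (Sc a f n) circleMeasure ≤ C * n := by
  obtain ⟨M, hM⟩ := hf_per.exists_abs_le one_ne_zero hf_C1.continuous
  obtain ⟨M', hM'⟩ := hf_per.deriv.exists_abs_le one_ne_zero (hf_C1.continuous_deriv le_rfl)
  have hmean : ∫ x in 0..1, f x = 0 := by
    rwa [← integral_circleMeasure, circleMeasure]
  refine ⟨2 * (M * M') / (1 - 1 / 2), fun a ha n _ => ?_⟩
  exact (variance_Sc_le hf_C1.continuous a n).trans <|
    sum_sum_le_of_abs_le_pow_dist (by norm_num) (by norm_num)
      (abs_integral_comp_prodA_mul_le hf_per hf_C1 hmean hM hM' ha) n
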